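/- Let V be a Banach k-vector space and κ := rank(V). If κ is an uncountable regular cardinal and there exists a free filtration 𝒱 of V such that 𝒱(α) is an almost cofree direct summand of V for every α < κ, then V is free. -/

import Mathlib

open Cardinal Set
open scoped ENNReal

universe u

noncomputable section

section BasicDefs

variable (k : Type u) [NormedField k]

/-- A family of coefficients is `c₀` if for every `ε > 0` only finitely many entries
have norm `≥ ε`. -/
def IsC0Family {E : Type*} (c : E → k) : Prop :=
  ∀ ε : ℝ, 0 < ε → {e : E | ε ≤ ‖c e‖}.Finite

variable (V : Type u) [SeminormedAddCommGroup V] [NormedSpace k V]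

/-- `E` is an orthonormal Schauder basis of `V`:
(i) every element of `E` has norm one;
(ii) every `c₀` family of coefficients gives a convergent sum whose norm is the
supremum of the norms of the coefficients;
(iii) every vector is such a sum. -/
def IsOrthonormalSchauderBasis (E : Set V) : Prop :=
  (∀ e ∈ E, ‖e‖ = 1) ∧
  (∀ c : E → k, IsC0Family k c →
    ∃ s : V, HasSum (fun e : E => c e • (e : V)) s ∧ ‖s‖ = ⨆ e : E, ‖c e‖) ∧
  (∀ v : V, ∃ c : E → k, IsC0Family k c ∧ HasSum (fun e : E => c e • (e : V)) v)

/-- A Banach `k`-vector space is free if it admits an orthonormal Schauder basis. -/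
def IsFreeBanach : Prop := ∃ E : Set V, IsOrthonormalSchauderBasis k V E

variable {V}

/-- The closed `k`-linear span of a set. -/
def closedSpan (S : Set V) : Submodule k V := (Submodule.span k S).topologicalClosure

variable (V)

/-- The rank of `V`: the least cardinality of a subset whose closed linear span is `V`. -/
def bRank : Cardinal.{u} := sInf {c : Cardinal.{u} | ∃ S : Set V, #S = c ∧ closedSpan k S = ⊤}

variable {V}

/-- Freeness of a closed subspace, viewed as a Banach space in its own right. -/
def IsFreeSub (W : Submodule k V) : Prop := IsFreeBanach k W

variable (V)

/-- `V` is `κ`-free if every closed subspace of the form `⟨S⟩` with `#S < κ` is free. -/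
def IsKappaFree (κ : Cardinal.{u}) : Prop :=
  ∀ S : Set V, #S < κ → IsFreeSub k (closedSpan k S)

/-- `V` is almost free if it is `rank(V)`-free. -/
def IsAlmostFree : Prop := IsKappaFree k V (bRank k V)

variable {V}

/-- Membership in `ℒ_{<κ}(V)`, the collection of closed spans of sets of cardinality `< κ`. -/
def MemL (κ : Cardinal.{u}) (W : Submodule k V) : Prop :=
  ∃ S : Set V, #S < κ ∧ W = closedSpan k S

/-- A free filtration of `V`, indexed by the ordinals below `(rank V).ord`. -/
def IsFreeFiltration (𝒱 : Ordinal.{u} → Submodule k V) : Prop :=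
  (∀ α < (bRank k V).ord, MemL k (bRank k V) (𝒱 α)) ∧
  (∀ α < (bRank k V).ord, IsFreeSub k (𝒱 α)) ∧
  (∀ α < (bRank k V).ord, ∀ β < α, 𝒱 β ≤ 𝒱 α) ∧
  (∀ α < (bRank k V).ord, Order.IsSuccLimit α →
    𝒱 α = closedSpan k (⋃ β ∈ Set.Iio α, ((𝒱 β : Submodule k V) : Set V))) ∧
  (∀ v : V, ∃ α < (bRank k V).ord, v ∈ 𝒱 α)

/-- `Wp` is a free supplement of `W` in `V`: `Wp` is a free closed subspace and the
canonical map `W ⊕ Wp → V` is an isometric isomorphism (for the max norm). -/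
def IsFreeSupplement (W Wp : Submodule k V) : Prop :=
  IsClosed (Wp : Set V) ∧ IsFreeSub k Wp ∧
  (∀ w ∈ W, ∀ w' ∈ Wp, ‖w + w'‖ = max ‖w‖ ‖w'‖) ∧
  (∀ v : V, ∃ w ∈ W, ∃ w' ∈ Wp, v = w + w')

/-- `W` is a cofree direct summand of `V` if it admits a free supplement. -/
def IsCofreeSummand (W : Submodule k V) : Prop := ∃ Wp, IsFreeSupplement k W Wp

/-- `W` is an almost cofree direct summand of `V` if it is a cofree direct summand of
every member of `ℒ_{<rank V}(V)` containing it. -/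
def IsAlmostCofreeSummand (W : Submodule k V) : Prop :=
  ∀ W' : Submodule k V, MemL k (bRank k V) W' → W ≤ W' →
    IsCofreeSummand k (W.comap W'.subtype)

end BasicDefs

section Aux
open Filter
open scoped NNReal
variable {k : Type u} [NormedField k]

section SemiV
variable {V : Type u} [SeminormedAddCommGroup V] [NormedSpace k V]

theorem closedSpan_mono {S T : Set V} (h : S ⊆ T) : closedSpan k S ≤ closedSpan k T :=
  Submodule.topologicalClosure_mono (Submodule.span_mono h)

theorem isClosed_closedSpan (S : Set V) : IsClosed ((closedSpan k S : Submodule k V) : Set V) :=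
  Submodule.isClosed_topologicalClosure _

theorem subset_closedSpan (S : Set V) : S ⊆ ((closedSpan k S : Submodule k V) : Set V) :=
  fun _ hx => Submodule.le_topologicalClosure _ (Submodule.subset_span hx)

theorem closedSpan_le {S : Set V} {N : Submodule k V} (h : S ⊆ ↑N) (hN : IsClosed (N : Set V)) :
    closedSpan k S ≤ N :=
  Submodule.topologicalClosure_minimal _ (Submodule.span_le.2 h) hN

/-- An orthonormal family: elements of norm one, finite linear combinations have norm
equal to the max of the coefficient norms. -/
def ONFam (k : Type u) [NormedField k] {V : Type u} [SeminormedAddCommGroup V] [NormedSpace k V]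
    (E : Set V) : Prop :=
  (∀ e ∈ E, ‖e‖ = 1) ∧
  ∀ F : Finset V, ↑F ⊆ E → ∀ c : V → k, ‖∑ x ∈ F, c x • x‖₊ = F.sup fun x => ‖c x‖₊

theorem ONFam.sum_subtype {E : Set V} (hE : ONFam k E) (c : E → k) (t : Finset E) :
    ‖∑ e ∈ t, c e • (e : V)‖₊ = t.sup fun e => ‖c e‖₊ := by
  classical
  set c' : V → k := fun v => if h : v ∈ E then c ⟨v, h⟩ else 0 with hc'
  have hcoe : ∀ e : E, c' (e : V) = c e := fun e => by simp [hc']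
  have h1 : ∑ e ∈ t, c e • (e : V) = ∑ x ∈ t.image Subtype.val, c' x • x := by
    rw [Finset.sum_image (fun a _ b _ h => Subtype.coe_injective h)]
    exact Finset.sum_congr rfl fun e _ => by rw [hcoe]
  have hsub : ↑(t.image Subtype.val) ⊆ E := by
    intro x hx
    simp only [Finset.coe_image, Set.mem_image, Finset.mem_coe] at hx
    obtain ⟨e, -, rfl⟩ := hx
    exact e.2
  rw [h1, hE.2 _ hsub c', Finset.sup_image]
  exact Finset.sup_congr rfl fun e _ => by simp [Function.comp, hcoe]

theorem ONFam.coeff_le {E : Set V} (hE : ONFam k E) {c : E → k} {s : V}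
    (hs : HasSum (fun e : E => c e • (e : V)) s) (e₀ : E) : ‖c e₀‖ ≤ ‖s‖ := by
  refine ge_of_tendsto hs.norm (Filter.eventually_atTop.2 ⟨{e₀}, fun t ht => ?_⟩)
  have h1 : ‖c e₀‖₊ ≤ t.sup fun e => ‖c e‖₊ :=
    Finset.le_sup (f := fun e => ‖c e‖₊) (Finset.singleton_subset_iff.1 ht)
  rw [← hE.sum_subtype c t] at h1
  exact_mod_cast h1

theorem IsC0Family.bddAbove {E : Type*} {c : E → k} (hc : IsC0Family k c) :
    BddAbove (Set.range fun e => ‖c e‖) := by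
  classical
  refine ⟨max 1 (((hc 1 one_pos).toFinset.sup fun e => ‖c e‖₊ : ℝ≥0) : ℝ), ?_⟩
  rintro x ⟨e, rfl⟩
  rcases le_or_gt 1 ‖c e‖ with h | h
  · have he : e ∈ (hc 1 one_pos).toFinset := (Set.Finite.mem_toFinset _).2 h
    have h2 := Finset.le_sup (f := fun e => ‖c e‖₊) he
    exact le_trans (by exact_mod_cast h2) (le_max_right _ _)
  · exact le_trans h.le (le_max_left _ _)

theorem IsC0Family.sub' {E : Type*} {c₁ c₂ : E → k} (h₁ : IsC0Family k c₁)
    (h₂ : IsC0Family k c₂) : IsC0Family k (fun e => c₁ e - c₂ e) := by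
  intro ε hε
  refine ((h₁ (ε/2) (by positivity)).union (h₂ (ε/2) (by positivity))).subset ?_
  intro e he
  simp only [Set.mem_setOf_eq, Set.mem_union] at he ⊢
  by_contra hcon
  push_neg at hcon
  have := norm_sub_le (c₁ e) (c₂ e)
  nlinarith [hcon.1, hcon.2]

theorem ONFam.exists_hasSum [CompleteSpace V] {E : Set V} (hE : ONFam k E)
    (c : E → k) (hc : IsC0Family k c) :
    ∃ s : V, HasSum (fun e : E => c e • (e : V)) s ∧ ‖s‖ = ⨆ e : E, ‖c e‖ := by
  classical
  have hsummable : Summable fun e : E => c e • (e : V) := by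
    rw [summable_iff_vanishing]
    intro U hU
    obtain ⟨ε, hε, hball⟩ := Metric.mem_nhds_iff.1 hU
    refine ⟨(hc ε hε).toFinset, fun t hdis => ?_⟩
    refine hball (mem_ball_zero_iff.2 ?_)
    have hnn : ∀ e ∈ t, ‖c e‖₊ < (⟨ε, hε.le⟩ : ℝ≥0) := by
      intro e het
      have hnot : e ∉ (hc ε hε).toFinset := fun hmem => (Finset.disjoint_left.1 hdis het) hmem
      have hlt : ¬ ε ≤ ‖c e‖ := by simpa using hnot
      exact_mod_cast not_le.1 hlt
    have hsup := (Finset.sup_lt_iff (a := (⟨ε, hε.le⟩ : ℝ≥0))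
      (show ⊥ < (⟨ε, hε.le⟩ : ℝ≥0) from by exact_mod_cast hε)).2 hnn
    have hsup' := lt_of_eq_of_lt (hE.sum_subtype c t) hsup
    exact_mod_cast hsup'
  refine ⟨_, hsummable.hasSum, le_antisymm ?_ ?_⟩
  · refine le_of_tendsto hsummable.hasSum.norm (Filter.Eventually.of_forall fun t => ?_)
    have h1 := hE.sum_subtype c t
    have hnonneg : (0:ℝ) ≤ ⨆ e : E, ‖c e‖ := Real.iSup_nonneg fun e => norm_nonneg _
    have h2 : t.sup (fun e => ‖c e‖₊) ≤ ⟨_, hnonneg⟩ := Finset.sup_le fun e _ => by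
      have h3 := le_ciSup hc.bddAbove e
      exact_mod_cast h3
    calc ‖∑ e ∈ t, c e • (e:V)‖ = ((t.sup fun e => ‖c e‖₊ : ℝ≥0) : ℝ) := by
          rw [← h1]; exact (coe_nnnorm _).symm
      _ ≤ _ := by exact_mod_cast h2
  · exact Real.iSup_le (fun e => hE.coeff_le hsummable.hasSum e) (norm_nonneg _)

end SemiV
section NormV
variable {V : Type u} [NormedAddCommGroup V] [NormedSpace k V]

theorem IsOrthonormalSchauderBasis.onfam {E : Set V}
    (h : IsOrthonormalSchauderBasis k V E) : ONFam k E := by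
  classical
  refine ⟨h.1, ?_⟩
  intro F hF c
  set cE : E → k := fun e => if (e : V) ∈ F then c e else 0 with hcE
  have hC0 : IsC0Family k cE := by
    intro ε hε
    refine (F.finite_toSet.preimage (Subtype.coe_injective.injOn)).subset ?_
    intro e he
    simp only [Set.mem_setOf_eq, hcE] at he
    by_cases hmem : (e : V) ∈ F
    · exact hmem
    · rw [if_neg hmem] at he; simp at he; linarith
  obtain ⟨s, hs, hnorm⟩ := h.2.1 cE hC0
  set F' : Finset E := F.preimage Subtype.val (Subtype.coe_injective.injOn) with hF'
  have hmemF' : ∀ e : E, e ∈ F' ↔ (e : V) ∈ F := fun e => Finset.mem_preimage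
  have hsum2 : HasSum (fun e : E => cE e • (e : V)) (∑ e ∈ F', cE e • (e : V)) := by
    refine hasSum_sum_of_ne_finset_zero ?_
    intro e he
    have : (e : V) ∉ F := fun hmem => he ((hmemF' e).2 hmem)
    simp [hcE, this]
  have hsF : s = ∑ e ∈ F', cE e • (e : V) := hs.unique hsum2
  have hsum3 : ∑ e ∈ F', cE e • (e : V) = ∑ x ∈ F, c x • x := by
    have := Finset.sum_preimage Subtype.val F (Subtype.coe_injective.injOn)
      (fun x => c x • x) (by
        intro x hx hrange
        exact absurd ⟨⟨x, hF hx⟩, rfl⟩ hrange)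
    rw [← this]
    refine Finset.sum_congr rfl fun e he => ?_
    have : (e : V) ∈ F := (hmemF' e).1 he
    simp [hcE, this]
  have hnonneg : (0:ℝ) ≤ ⨆ e : E, ‖cE e‖ := Real.iSup_nonneg fun _ => norm_nonneg _
  have hsup : ‖s‖ = ((F.sup fun x => ‖c x‖₊ : ℝ≥0) : ℝ) := by
    rw [hnorm]
    apply le_antisymm
    · refine Real.iSup_le (fun e => ?_) (by positivity)
      by_cases hmem : (e : V) ∈ F
      · simp only [hcE, if_pos hmem]
        exact_mod_cast Finset.le_sup (f := fun x => ‖c x‖₊) hmem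
      · simp [hcE, if_neg hmem]
    · have h4 : F.sup (fun x => ‖c x‖₊) ≤ ⟨_, hnonneg⟩ := by
        refine Finset.sup_le fun x hx => ?_
        have hxE : x ∈ E := hF hx
        have h5 := le_ciSup hC0.bddAbove (⟨x, hxE⟩ : E)
        have h6 : cE ⟨x, hxE⟩ = c x := by simp [hcE, hx]
        rw [h6] at h5
        exact_mod_cast h5
      exact_mod_cast h4
  apply NNReal.coe_injective
  rw [coe_nnnorm, ← hsum3, ← hsF, hsup]

theorem onfam_mem_c0sum [CompleteSpace V] [CompleteSpace k] {E : Set V} (hE : ONFam k E)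
    {v : V} (hv : v ∈ closedSpan k E) :
    ∃ c : E → k, IsC0Family k c ∧ HasSum (fun e : E => c e • (e : V)) v := by
  classical
  set M : Submodule k V :=
    { carrier := {w : V | ∃ c : E → k, IsC0Family k c ∧ HasSum (fun e : E => c e • (e : V)) w}
      zero_mem' := by
        refine ⟨0, ?_, by simpa using hasSum_zero⟩
        intro ε hε
        refine Set.finite_empty.subset ?_
        intro e he
        simp only [Set.mem_setOf_eq, Pi.zero_apply, norm_zero] at he
        exact absurd he (not_le.2 hε)
      add_mem' := by
        rintro a b ⟨c₁, h₁, hs₁⟩ ⟨c₂, h₂, hs₂⟩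
        refine ⟨c₁ + c₂, ?_, by simpa [add_smul] using hs₁.add hs₂⟩
        intro ε hε
        refine ((h₁ (ε/2) (by positivity)).union (h₂ (ε/2) (by positivity))).subset ?_
        intro e he
        simp only [Set.mem_setOf_eq, Pi.add_apply, Set.mem_union] at he ⊢
        by_contra hcon
        push_neg at hcon
        have := norm_add_le (c₁ e) (c₂ e)
        nlinarith [hcon.1, hcon.2]
      smul_mem' := by
        rintro a w ⟨c, h, hs⟩
        refine ⟨a • c, ?_, by simpa [smul_smul] using hs.const_smul a⟩
        intro ε hε
        rcases eq_or_ne a 0 with rfl | ha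
        · refine Set.finite_empty.subset ?_
          intro e he
          simp only [Set.mem_setOf_eq, Pi.smul_apply, smul_eq_mul, zero_mul, norm_zero] at he
          exact absurd he (not_le.2 hε)
        · have hna : 0 < ‖a‖ := norm_pos_iff.2 ha
          refine (h (ε / ‖a‖) (by positivity)).subset ?_
          intro e he
          simp only [Set.mem_setOf_eq, Pi.smul_apply, smul_eq_mul, norm_mul] at he ⊢
          exact (div_le_iff₀ hna).2 (by linarith) } with hM
  have hEM : E ⊆ (M : Set V) := by
    intro x hx
    refine ⟨fun e => if e = ⟨x, hx⟩ then 1 else 0, ?_, ?_⟩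
    · intro ε hε
      refine (Set.finite_singleton (⟨x, hx⟩ : E)).subset ?_
      intro e he
      simp only [Set.mem_setOf_eq] at he
      by_contra hne
      simp only [Set.mem_singleton_iff] at hne
      rw [if_neg hne] at he
      simp at he; linarith
    · have : (fun e : E => (if e = ⟨x, hx⟩ then (1:k) else 0) • (e : V)) =
          fun e : E => if e = ⟨x, hx⟩ then x else 0 := by
        funext e
        split
        · next h => subst h; simp
        · simp_all
      rw [this]
      exact hasSum_ite_eq (⟨x, hx⟩ : E) x
  have hMclosed : IsClosed (M : Set V) := by
    refine isClosed_of_closure_subset ?_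
    intro v hv
    obtain ⟨u, hu, hlim⟩ := mem_closure_iff_seq_limit.1 hv
    choose cs hcs0 hcsSum using hu
    have hcauchy : CauchySeq u := hlim.cauchySeq
    have hdiff : ∀ m n : ℕ, ∀ e : E, ‖cs m e - cs n e‖ ≤ ‖u m - u n‖ := by
      intro m n e
      have hsum : HasSum (fun e : E => (cs m e - cs n e) • (e : V)) (u m - u n) := by
        simpa [sub_smul] using (hcsSum m).sub (hcsSum n)
      exact hE.coeff_le hsum e
    have hkey : ∀ e : E, CauchySeq fun n => cs n e := by
      intro e
      rw [Metric.cauchySeq_iff]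
      intro ε hε
      obtain ⟨N, hN⟩ := Metric.cauchySeq_iff.1 hcauchy ε hε
      refine ⟨N, fun m hm n hn => lt_of_le_of_lt ?_ (hN m hm n hn)⟩
      simpa [dist_eq_norm] using hdiff m n e
    choose c hc using fun e => cauchySeq_tendsto_of_complete (hkey e)
    have hunif : ∀ ε : ℝ, 0 < ε → ∃ N, ∀ n ≥ N, ∀ e : E, ‖c e - cs n e‖ ≤ ε := by
      intro ε hε
      obtain ⟨N, hN⟩ := Metric.cauchySeq_iff.1 hcauchy ε hε
      refine ⟨N, fun n hn e => ?_⟩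
      have hto : Filter.Tendsto (fun m => ‖cs m e - cs n e‖) Filter.atTop
          (nhds ‖c e - cs n e‖) := ((hc e).sub tendsto_const_nhds).norm
      refine le_of_tendsto hto (Filter.eventually_atTop.2 ⟨N, fun m hm => ?_⟩)
      exact le_trans (hdiff m n e) (le_of_lt (by simpa [dist_eq_norm] using hN m hm n hn))
    have hC0 : IsC0Family k c := by
      intro ε hε
      obtain ⟨N, hN⟩ := hunif (ε/2) (by positivity)
      refine (hcs0 N (ε/2) (by positivity)).subset ?_
      intro e he
      simp only [Set.mem_setOf_eq] at he ⊢
      by_contra hlt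
      push_neg at hlt
      have h7 : ‖c e‖ ≤ ‖c e - cs N e‖ + ‖cs N e‖ := by
        simpa using norm_add_le (c e - cs N e) (cs N e)
      nlinarith [hN N le_rfl e]
    obtain ⟨s, hs, -⟩ := hE.exists_hasSum c hC0
    have hclose : ∀ ε : ℝ, 0 < ε → ∃ N, ∀ n ≥ N, ‖s - u n‖ ≤ ε := by
      intro ε hε
      obtain ⟨N, hN⟩ := hunif ε hε
      refine ⟨N, fun n hn => ?_⟩
      obtain ⟨d, hdsum, hdnorm⟩ := hE.exists_hasSum _ ((hC0.sub' (hcs0 n)))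
      have hd : d = s - u n := hdsum.unique (by simpa [sub_smul] using hs.sub (hcsSum n))
      rw [← hd, hdnorm]
      exact Real.iSup_le (fun e => hN n hn e) hε.le
    have htend : Filter.Tendsto u Filter.atTop (nhds s) := by
      rw [Metric.tendsto_atTop]
      intro ε hε
      obtain ⟨N, hN⟩ := hclose (ε/2) (by positivity)
      refine ⟨N, fun n hn => ?_⟩
      have := hN n hn
      rw [dist_eq_norm, ← norm_neg, neg_sub]
      linarith
    have hvs : v = s := tendsto_nhds_unique hlim htend
    exact hvs ▸ ⟨c, hC0, hs⟩
  exact closedSpan_le hEM hMclosed hv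

end NormV
section Transfer
variable {V' V : Type u} [NormedAddCommGroup V'] [NormedSpace k V']
  [SeminormedAddCommGroup V] [NormedSpace k V]

theorem ONFam.image (ι : V' →ₗᵢ[k] V) {E : Set V'} (hE : ONFam k E) :
    ONFam k (ι '' E) := by
  classical
  constructor
  · rintro e ⟨x, hx, rfl⟩
    rw [ι.norm_map]
    exact hE.1 x hx
  · intro F hF c
    set F' : Finset V' := F.preimage ι (ι.injective.injOn) with hF'
    have himg : F'.image ι = F := by
      rw [Finset.image_preimage]
      refine Finset.filter_true_of_mem fun x hx => ?_
      obtain ⟨y, -, rfl⟩ := hF hx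
      exact ⟨y, rfl⟩
    have hF'E : ↑F' ⊆ E := by
      intro y hy
      have h1 : ι y ∈ F := by
        rw [← himg]
        exact Finset.mem_image_of_mem _ (by exact_mod_cast hy)
      obtain ⟨z, hz, hze⟩ := hF h1
      rwa [← ι.injective hze]
    calc ‖∑ x ∈ F, c x • x‖₊ = ‖∑ y ∈ F', c (ι y) • ι y‖₊ := by
          rw [← himg, Finset.sum_image (fun a _ b _ h => ι.injective h)]
      _ = ‖ι (∑ y ∈ F', c (ι y) • y)‖₊ := by rw [map_sum]; simp [ι.map_smul]
      _ = ‖∑ y ∈ F', c (ι y) • y‖₊ := ι.nnnorm_map _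
      _ = F'.sup (fun y => ‖c (ι y)‖₊) := hE.2 F' hF'E _
      _ = F.sup fun x => ‖c x‖₊ := by rw [← himg, Finset.sup_image]; rfl

theorem range_mem_closedSpan_image (ι : V' →ₗᵢ[k] V) {E : Set V'}
    (h : IsOrthonormalSchauderBasis k V' E) (x : V') :
    ι x ∈ closedSpan k (ι '' E) := by
  obtain ⟨c, -, hs⟩ := h.2.2 x
  have hs' : HasSum (fun e : E => ι (c e • (e : V'))) (ι x) :=
    hs.map ι.toLinearMap.toAddMonoidHom ι.continuous
  have hmem : ι x ∈ closure ((Submodule.span k (ι '' E) : Submodule k V) : Set V) := by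
    refine mem_closure_of_tendsto hs' (Filter.Eventually.of_forall fun t => ?_)
    refine Submodule.sum_mem _ fun e _ => ?_
    rw [ι.map_smul]
    exact Submodule.smul_mem _ _ (Submodule.subset_span ⟨e, e.2, rfl⟩)
  exact hmem

end Transfer


end Aux

section SetTheory

/-- `C` is a club (closed unbounded) subset of the ordinals below `o`. -/
def IsClubIn (C : Set Ordinal.{u}) (o : Ordinal.{u}) : Prop :=
  C ⊆ Set.Iio o ∧
  (∀ α < o, 0 < α → (∀ β < α, ∃ γ ∈ C, β < γ ∧ γ < α) → α ∈ C) ∧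
  (∀ α < o, ∃ γ ∈ C, α < γ)

/-- `S` is stationary below `o`: it meets every club subset of the ordinals below `o`. -/
def IsStationaryIn (S : Set Ordinal.{u}) (o : Ordinal.{u}) : Prop :=
  ∀ C : Set Ordinal.{u}, IsClubIn C o → (S ∩ C).Nonempty

/-- A filter is `λ`-complete if it is closed under intersections of fewer than `λ`
of its members. -/
def IsLambdaCompleteFilter {I : Type u} (lam : Cardinal.{u}) (F : Filter I) : Prop :=
  ∀ S : Set (Set I), #S < lam → (∀ A ∈ S, A ∈ F) → ⋂₀ S ∈ F

/-- `κ` is `λ`-strongly compact: `κ ≥ ℵ₁` and every `κ`-complete (proper) filter on a set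
of cardinality `κ` extends to a `λ`-complete ultrafilter. -/
def IsLambdaStronglyCompact (κ lam : Cardinal.{u}) : Prop :=
  Cardinal.aleph 1 ≤ κ ∧
  ∀ (I : Type u) (F : Filter I), #I = κ → F.NeBot →
    IsLambdaCompleteFilter κ F →
    ∃ U : Ultrafilter I, F ≤ ↑U ∧ IsLambdaCompleteFilter lam (↑U : Filter I)

/-- `κ` is weakly compact: `κ ≥ ℵ₁` and every 2-colouring of the 2-element subsets of a
set of cardinality `κ` has a homogeneous subset of cardinality `κ`. -/
def IsWeaklyCompactCard (κ : Cardinal.{u}) : Prop :=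
  Cardinal.aleph 1 ≤ κ ∧
  ∀ f : Set κ.out → Bool, ∃ S : Set κ.out, #S = κ ∧ ∃ b : Bool,
    ∀ x ∈ S, ∀ y ∈ S, x ≠ y → f {x, y} = b

end SetTheory

section ValuationRing

variable (k : Type u) [NormedField k] [IsUltrametricDist k]

/-- The valuation ring `O_k = {c : ‖c‖ ≤ 1}` of `k`, as an additive subgroup. -/
def okAddSubgroup : AddSubgroup k where
  carrier := {c : k | ‖c‖ ≤ 1}
  zero_mem' := by simp
  add_mem' {a b} ha hb := le_trans (IsUltrametricDist.norm_add_le_max a b)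
    (max_le ha hb)
  neg_mem' {a} ha := by simpa using ha

/-- `λ_k`: the successor cardinal of `max {#(k/O_k), ℵ₀}`. -/
def lambdaK : Cardinal.{u} := Order.succ (max #(k ⧸ okAddSubgroup k) Cardinal.aleph0)

end ValuationRing

end

section Statement

variable (k : Type u) [NormedField k] [IsUltrametricDist k] [CompleteSpace k]
variable (V : Type u) [NormedAddCommGroup V] [IsUltrametricDist V]
  [NormedSpace k V] [CompleteSpace V]

/-- If `rank V` is an uncountable regular cardinal and `V` admits a free filtration all
of whose members are almost cofree direct summands of `V`, then `V` is free. -/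
theorem free_of_freeFiltration_almostCofree
    (hreg : (bRank k V).IsRegular) (hunc : Cardinal.aleph0 < bRank k V)
    (𝒱 : Ordinal.{u} → Submodule k V) (h𝒱 : IsFreeFiltration k 𝒱)
    (hacf : ∀ α < (bRank k V).ord, IsAlmostCofreeSummand k (𝒱 α)) :
    IsFreeBanach k V := by
  classical
  obtain ⟨hmem, hfree, hmono, hlimV, hcover⟩ := h𝒱
  set κo : Ordinal.{u} := (bRank k V).ord with hκo
  have hord : Order.IsSuccLimit κo := Cardinal.isSuccLimit_ord hreg.aleph0_le
  have hsucclt : ∀ β : Ordinal.{u}, β < β + 1 := fun β => by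
    rw [Ordinal.add_one_eq_succ]; exact Order.lt_succ β
  have hlt1 : ∀ γ β : Ordinal.{u}, γ < β + 1 ↔ γ ≤ β := fun γ β => by
    rw [Ordinal.add_one_eq_succ]; exact Order.lt_succ_iff
  have hclosed : ∀ α, α < κo → IsClosed ((𝒱 α : Submodule k V) : Set V) := by
    intro α hα
    obtain ⟨S, -, hS⟩ := hmem α hα
    rw [hS]
    exact isClosed_closedSpan S
  -- stage 0 basis
  obtain ⟨E0, hE0on, hE0sub, hE0span⟩ : ∃ S : Set V, ONFam k S ∧ S ⊆ ↑(𝒱 0) ∧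
      𝒱 0 ≤ closedSpan k S := by
    obtain ⟨E'', hE''⟩ := hfree 0 hord.pos
    refine ⟨(𝒱 0).subtypeₗᵢ '' E'', hE''.onfam.image _, ?_, ?_⟩
    · rintro x ⟨y, -, rfl⟩
      exact y.2
    · intro v hv
      have := range_mem_closedSpan_image (𝒱 0).subtypeₗᵢ hE'' ⟨v, hv⟩
      simpa using this
  -- stage spec for successors
  have hstage : ∀ β : Ordinal.{u}, β + 1 < κo →
      ∃ S : Set V, ONFam k S ∧ S ⊆ ↑(𝒱 (β+1)) ∧ ∃ P : Submodule k V,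
        S ⊆ ↑P ∧ P ≤ closedSpan k S ∧
        (∀ a ∈ 𝒱 β, ∀ b ∈ P, ‖a + b‖ = max ‖a‖ ‖b‖) ∧
        (∀ v ∈ 𝒱 (β+1), ∃ a ∈ 𝒱 β, ∃ b ∈ P, v = a + b) := by
    intro β hβ1
    have hβ0 : β < κo := lt_trans (hsucclt β) hβ1
    have hle : 𝒱 β ≤ 𝒱 (β+1) := hmono (β+1) hβ1 β (hsucclt β)
    obtain ⟨Wp, hWpclosed, hWpfree, hWpiso, hWpdec⟩ :=
      hacf β hβ0 (𝒱 (β+1)) (hmem (β+1) hβ1) hle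
    obtain ⟨E'', hE''⟩ := hWpfree
    set ι : ↥Wp →ₗᵢ[k] V := ((𝒱 (β+1)).subtypeₗᵢ).comp Wp.subtypeₗᵢ with hι
    refine ⟨ι '' E'', hE''.onfam.image ι, ?_, Wp.map (𝒱 (β+1)).subtype, ?_, ?_, ?_, ?_⟩
    · rintro x ⟨y, -, rfl⟩
      exact (y : ↥(𝒱 (β+1))).2
    · rintro x ⟨y, -, rfl⟩
      exact ⟨y, y.2, rfl⟩
    · rintro b ⟨y, hy, rfl⟩
      have := range_mem_closedSpan_image ι hE'' ⟨y, hy⟩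
      exact this
    · intro a ha b hb
      obtain ⟨y, hy, rfl⟩ := hb
      exact hWpiso ⟨a, hle ha⟩ (by simpa using ha) y hy
    · intro v hv
      obtain ⟨w, hw, w', hw', heq⟩ := hWpdec ⟨v, hv⟩
      refine ⟨↑w, hw, ↑w', ⟨w', hw', rfl⟩, ?_⟩
      exact congrArg Subtype.val heq
  choose! Efun hEon hEsub Pfun hEP hPle hPiso hPdec using hstage
  set B : Ordinal.{u} → Set V := fun α => E0 ∪ ⋃ β ∈ Set.Iio α, Efun β with hB
  have hBmono : ∀ {γ α : Ordinal.{u}}, γ ≤ α → B γ ⊆ B α := by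
    intro γ α h
    intro x hx
    simp only [hB, Set.mem_union] at hx ⊢
    rcases hx with hx | hx
    · exact Or.inl hx
    · obtain ⟨β, hβ, hxβ⟩ := Set.mem_iUnion₂.1 hx
      exact Or.inr (Set.mem_iUnion₂.2 ⟨β, lt_of_lt_of_le hβ h, hxβ⟩)
  have hE0B : ∀ α, E0 ⊆ B α := fun α => Set.subset_union_left
  have hEB : ∀ {β α : Ordinal.{u}}, β < α → Efun β ⊆ B α := by
    intro β α h
    intro x hx
    simp only [hB, Set.mem_union]
    exact Or.inr (Set.mem_iUnion₂.2 ⟨β, h, hx⟩)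
  have hBsucc : ∀ β : Ordinal.{u}, B (β+1) = B β ∪ Efun β := by
    intro β
    rw [hB]
    simp only
    rw [Set.union_assoc]
    congr 1
    ext x
    simp only [Set.mem_iUnion, Set.mem_union, Set.mem_Iio]
    constructor
    · rintro ⟨β', hβ', hx⟩
      rcases lt_or_eq_of_le ((hlt1 β' β).1 hβ') with h | h
      · exact Or.inl ⟨β', h, hx⟩
      · exact Or.inr (h ▸ hx)
    · rintro (⟨β', hβ', hx⟩ | hx)
      · exact ⟨β', lt_trans hβ' (hsucclt β), hx⟩
      · exact ⟨β, hsucclt β, hx⟩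
  -- finite subsets of B at a limit come from an earlier stage
  have hstagefin : ∀ α : Ordinal.{u}, Order.IsSuccLimit α → ∀ F : Finset V, ↑F ⊆ B α →
      ∃ γ, γ < α ∧ ↑F ⊆ B γ := by
    intro α hα F
    induction F using Finset.induction_on with
    | empty => exact fun _ => ⟨0, hα.pos, by simp⟩
    | @insert x F hxF ih =>
      intro hF
      rw [Finset.coe_insert, Set.insert_subset_iff] at hF
      obtain ⟨γ₁, hγ₁, hFγ₁⟩ := ih hF.2
      rcases hF.1 with hx | hx
      · exact ⟨γ₁, hγ₁, by
          rw [Finset.coe_insert, Set.insert_subset_iff]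
          exact ⟨hE0B γ₁ hx, hFγ₁⟩⟩
      · obtain ⟨β, hβα, hxβ⟩ := Set.mem_iUnion₂.1 hx
        refine ⟨max γ₁ (β+1), max_lt hγ₁ (by
          rw [Ordinal.add_one_eq_succ]
          exact hα.succ_lt hβα), ?_⟩
        rw [Finset.coe_insert, Set.insert_subset_iff]
        constructor
        · exact hEB (lt_of_lt_of_le (hsucclt β) (le_max_right _ _)) hxβ
        · exact hFγ₁.trans (hBmono (le_max_left _ _))
  -- main transfinite induction
  have hQ : ∀ α, α < κo → ONFam k (B α) ∧ closedSpan k (B α) = 𝒱 α := by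
    intro α
    induction α using Ordinal.induction with
    | _ α ih =>
    intro hα
    have hBV : ∀ γ, γ < α → B γ ⊆ ↑(𝒱 γ) := by
      intro γ hγ
      intro x hx
      have h := (ih γ hγ (lt_trans hγ hα)).2
      exact h ▸ subset_closedSpan (B γ) hx
    rcases Ordinal.zero_or_succ_or_isSuccLimit α with h0 | ⟨β, hβ⟩ | hαlim
    · subst h0
      have hB0 : B 0 = E0 := by
        rw [hB]; simp
      rw [hB0]
      exact ⟨hE0on, le_antisymm (closedSpan_le hE0sub (hclosed 0 hα)) hE0span⟩
    · have hβ1 : α = β + 1 := by rw [Ordinal.add_one_eq_succ]; exact hβ.symm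
      subst hβ1
      have hβκ : β + 1 < κo := hα
      have hβα : β < β + 1 := hsucclt β
      obtain ⟨hONβ, hspanβ⟩ := ih β hβα (lt_trans hβα hβκ)
      have hEonβ := hEon β hβκ
      have hBsub : B β ⊆ ↑(𝒱 β) := fun x hx => hspanβ ▸ subset_closedSpan (B β) hx
      constructor
      · constructor
        · intro e he
          rw [hBsucc β] at he
          rcases he with h | h
          · exact hONβ.1 e h
          · exact hEonβ.1 e h
        · intro F hF c
          rw [hBsucc β] at hF
          set F₁ := F.filter (· ∈ B β) with hF₁
          set F₂ := F.filter (¬ · ∈ B β) with hF₂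
          have hunion : F₁ ∪ F₂ = F := Finset.filter_union_filter_not_eq _ F
          have hdisj : Disjoint F₁ F₂ := Finset.disjoint_filter_filter_not F F _
          have hF₁B : ↑F₁ ⊆ B β := fun x hx => (Finset.mem_filter.1 hx).2
          have hF₂E : ↑F₂ ⊆ Efun β := by
            intro x hx
            obtain ⟨hxF, hnx⟩ := Finset.mem_filter.1 hx
            rcases hF hxF with h | h
            · exact absurd h hnx
            · exact h
          have ha : ∑ x ∈ F₁, c x • x ∈ 𝒱 β :=
            Submodule.sum_mem _ fun x hx => Submodule.smul_mem _ _ (hBsub (hF₁B hx))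
          have hb : ∑ x ∈ F₂, c x • x ∈ Pfun β :=
            Submodule.sum_mem _ fun x hx => Submodule.smul_mem _ _ (hEP β hβκ (hF₂E hx))
          have hsum : ∑ x ∈ F, c x • x = ∑ x ∈ F₁, c x • x + ∑ x ∈ F₂, c x • x := by
            rw [← hunion, Finset.sum_union hdisj]
          have hnorm := hPiso β hβκ _ ha _ hb
          have h1 : ‖∑ x ∈ F₁, c x • x‖₊ = F₁.sup (fun x => ‖c x‖₊) := hONβ.2 F₁ hF₁B c
          have h2 : ‖∑ x ∈ F₂, c x • x‖₊ = F₂.sup (fun x => ‖c x‖₊) := hEonβ.2 F₂ hF₂E c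
          apply NNReal.coe_injective
          rw [coe_nnnorm, hsum, hnorm, ← coe_nnnorm, ← coe_nnnorm, h1, h2, ← hunion,
            Finset.sup_union]
          exact (NNReal.coe_max _ _).symm
      · apply le_antisymm
        · refine closedSpan_le ?_ (hclosed _ hβκ)
          rw [hBsucc β]
          intro x hx
          rcases hx with h | h
          · exact hmono (β+1) hβκ β hβα (hBsub h)
          · exact hEsub β hβκ h
        · intro v hv
          obtain ⟨a, haβ, b, hbP, rfl⟩ := hPdec β hβκ v hv
          refine Submodule.add_mem _ ?_ ?_
          · exact closedSpan_mono (hBmono hβα.le) (hspanβ ▸ haβ : a ∈ closedSpan k (B β))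
          · refine closedSpan_mono ?_ (hPle β hβκ hbP)
            rw [hBsucc β]
            exact Set.subset_union_right
    · constructor
      · constructor
        · intro e he
          obtain ⟨γ, hγ, hsub⟩ := hstagefin α hαlim {e} (by simpa using he)
          exact ((ih γ hγ (lt_trans hγ hα)).1).1 e (hsub (by simp))
        · intro F hF c
          obtain ⟨γ, hγ, hsub⟩ := hstagefin α hαlim F hF
          exact ((ih γ hγ (lt_trans hγ hα)).1).2 F hsub c
      · apply le_antisymm
        · refine closedSpan_le ?_ (hclosed α hα)
          intro x hx
          rcases hx with h | h
          · exact hmono α hα 0 hαlim.pos (hE0sub h)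
          · obtain ⟨β, hβ, hxβ⟩ := Set.mem_iUnion₂.1 h
            have hβ1α : β + 1 ≤ α := by
              rw [Ordinal.add_one_eq_succ]
              exact Order.succ_le_of_lt hβ
            have hβ1κ : β + 1 < κo := lt_of_le_of_lt hβ1α hα
            have hx1 : x ∈ 𝒱 (β+1) := hEsub β hβ1κ hxβ
            rcases eq_or_lt_of_le hβ1α with heq | hlt
            · exact heq ▸ hx1
            · exact hmono α hα (β+1) hlt hx1
        · rw [hlimV α hα hαlim]
          refine closedSpan_le ?_ (isClosed_closedSpan (B α))
          intro x hx
          obtain ⟨β, hβ, hxβ⟩ := Set.mem_iUnion₂.1 hx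
          have h := (ih β hβ (lt_trans hβ hα)).2
          rw [← h] at hxβ
          exact closedSpan_mono (hBmono hβ.le) hxβ
  -- assemble
  have hBtotON : ONFam k (B κo) := by
    constructor
    · intro e he
      obtain ⟨γ, hγ, hsub⟩ := hstagefin κo hord {e} (by simpa using he)
      exact ((hQ γ hγ).1).1 e (hsub (by simp))
    · intro F hF c
      obtain ⟨γ, hγ, hsub⟩ := hstagefin κo hord F hF
      exact ((hQ γ hγ).1).2 F hsub c
  have hBtotSpan : closedSpan k (B κo) = ⊤ := by
    rw [eq_top_iff]
    intro v _
    obtain ⟨α, hα, hv⟩ := hcover v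
    exact closedSpan_mono (hBmono hα.le) ((hQ α hα).2 ▸ hv)
  refine ⟨B κo, hBtotON.1, fun c hc => hBtotON.exists_hasSum c hc, fun v => ?_⟩
  exact onfam_mem_c0sum hBtotON (hBtotSpan ▸ Submodule.mem_top : v ∈ closedSpan k (B κo))


end Statement
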